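/- Let k be a field of characteristic ≠ 2, (P, ⊥) a poset with an order-reversing involution, and ψ an indecomposable linear representation of P in a finite-dimensional k-vector space V such that every endomorphism of ψ has the form c·id_V + r with c ∈ k and r nilpotent. If B₁ and B₂ are compatible forms for ψ, then B₁ and B₂ are both symmetric or both alternating, and there exist a nonzero scalar c ∈ k and an automorphism h of ψ such that B₂(x, y) = c · B₁(h x, h y) for all x, y ∈ V. -/

import Mathlib

/-!
Nondegeneracy of `B₁` turns `B₂` into the endomorphism `f` with `B₂ x y = B₁ (f x) y`.
Compatibility of both forms makes `f` an endomorphism of `ψ`, so `f = c + r` with `r` nilpotent,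
and `c ≠ 0` because `f` is injective. If exactly one of the forms is alternating, `f` is
skew-adjoint for `B₁`; then `-(f + c)` is the adjoint of the nilpotent `f - c`, hence nilpotent,
and the scalar `2c = (f + c) - (f - c)` is nilpotent, which is absurd. Otherwise `f` is
self-adjoint, and Newton's method gives a square root `h` of `c⁻¹ f` that is a polynomial in `f`,
hence a self-adjoint automorphism of `ψ` with `c B₁ (h x) (h y) = c B₁ (h² x) y = B₂ x y`.
-/

open Polynomial LinearMap

theorem exists_sq_eq_of_isNilpotent_sub_one {S : Type*} [CommRing S] (h2 : IsUnit (2 : S))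
    {a : S} (ha : IsNilpotent (a - 1)) : ∃ r : S, r ^ 2 = a ∧ IsNilpotent (r - 1) := by
  have hP : IsNilpotent (aeval (1 : S) (X ^ 2 - C a)) := by
    rw [← isNilpotent_neg_iff]; simpa using ha
  have hP' : IsUnit (aeval (1 : S) (derivative (X ^ 2 - C a))) := by
    simpa [one_add_one_eq_two] using h2
  obtain ⟨r, ⟨hr, hroot⟩, -⟩ := existsUnique_nilpotent_sub_and_aeval_eq_zero hP hP'
  refine ⟨r, by simpa [sub_eq_zero] using hroot, ?_⟩
  rw [← isNilpotent_neg_iff]; simpa using hr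

open scoped IsMulCommutative in
theorem exists_mem_adjoin_sq_eq_of_isNilpotent_sub_one {R A : Type*} [CommRing R] [Ring A]
    [Algebra R A] (h2 : IsUnit (2 : R)) {a : A} (ha : IsNilpotent (a - 1)) :
    ∃ r ∈ Algebra.adjoin R {a}, r ^ 2 = a ∧ IsUnit r := by
  let S := Algebra.adjoin R {a}
  obtain ⟨r, hr, hnil⟩ :=
    exists_sq_eq_of_isNilpotent_sub_one (a := ⟨a, Algebra.self_mem_adjoin_singleton R a⟩)
    (by simpa only [map_ofNat] using h2.map (algebraMap R S))
    ((IsNilpotent.map_iff (f := S.val) Subtype.val_injective).1 ha)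
  refine ⟨r, r.2, congrArg Subtype.val hr, ?_⟩
  simpa using (hnil.map S.val).isUnit_add_one

section AdjointPair

variable {R M N : Type*} [CommRing R] [AddCommGroup M] [Module R M] [AddCommGroup N] [Module R N]
  {B : M →ₗ[R] M →ₗ[R] N}

theorem LinearMap.IsAdjointPair.pow {f g : Module.End R M} (h : IsAdjointPair B B f g) (n : ℕ) :
    IsAdjointPair B B ⇑(f ^ n) ⇑(g ^ n) := by
  induction n with
  | zero => exact isAdjointPair_one
  | succ n ih => rw [pow_succ, pow_succ']; exact ih.mul h

theorem LinearMap.IsAdjointPair.isNilpotent {f g : Module.End R M} (hB : B.SeparatingRight)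
    (h : IsAdjointPair B B f g) (hf : IsNilpotent f) : IsNilpotent g := by
  obtain ⟨n, hn⟩ := hf
  refine ⟨n, LinearMap.ext fun y ↦ hB _ fun x ↦ ?_⟩
  rw [← h.pow n x y, hn]
  simp

theorem LinearMap.IsSelfAdjoint.aeval {f : Module.End R M} (hf : B.IsSelfAdjoint f) (q : R[X]) :
    B.IsSelfAdjoint (aeval f q) := by
  induction q using Polynomial.induction_on' with
  | add p q hp hq => rw [map_add]; exact hp.add hq
  | monomial n c =>
    simpa only [LinearMap.IsSelfAdjoint, aeval_monomial, ← Algebra.smul_def, LinearMap.coe_smul]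
      using (hf.pow n).smul c

theorem LinearMap.IsSelfAdjoint.of_mem_adjoin {f a : Module.End R M} (hf : B.IsSelfAdjoint f)
    (ha : a ∈ Algebra.adjoin R {f}) : B.IsSelfAdjoint a := by
  rw [Algebra.adjoin_singleton_eq_range_aeval] at ha
  obtain ⟨q, rfl⟩ := ha
  exact hf.aeval q

end AdjointPair

section Skew

variable {k V : Type*} [Field k] [AddCommGroup V] [Module k V] [Nontrivial V]

theorem eq_zero_of_isSkewAdjoint_of_isNilpotent_sub {B : LinearMap.BilinForm k V}
    (h2 : (2 : k) ≠ 0) (hB : B.SeparatingRight) {f : Module.End k V} (hf : B.IsSkewAdjoint f)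
    {c : k} (hc : IsNilpotent (f - c • 1)) : c = 0 := by
  have hadj : IsAdjointPair B B ⇑(f - c • 1) ⇑(-(f + c • 1)) := by
    rw [neg_add']; exact hf.sub (isAdjointPair_one.smul c)
  have hc' : IsNilpotent (f + c • 1) := isNilpotent_neg_iff.1 (hadj.isNilpotent hB hc)
  have hcomm : Commute (f + c • 1) (f - c • 1) :=
    ((Commute.refl f).add_left ((Commute.one_left f).smul_left c)).sub_right
      ((Commute.one_right _).smul_right c)
  have h2c : IsNilpotent (algebraMap k (Module.End k V) (2 * c)) := by
    have hdiff : f + c • 1 - (f - c • 1) = algebraMap k (Module.End k V) (2 * c) := by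
      rw [Algebra.algebraMap_eq_smul_one]; module
    exact hdiff ▸ hcomm.isNilpotent_sub hc' hc
  rw [IsNilpotent.map_iff (algebraMap k (Module.End k V)).injective] at h2c
  simpa [h2] using h2c.eq_zero

theorem ne_zero_of_injective_of_isNilpotent_sub {f : Module.End k V} (hf : Function.Injective f)
    {c : k} (hc : IsNilpotent (f - c • 1)) : c ≠ 0 := by
  rintro rfl
  obtain ⟨n, hn⟩ := hc
  obtain ⟨v, hv⟩ := exists_ne (0 : V)
  have : (f ^ n) v = 0 := by simpa using congrArg (· v) hn
  exact hv ((Module.End.coe_pow f n ▸ hf.iterate n) (this.trans (map_zero _).symm))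

end Skew

section Compatible

variable {k V P : Type*} [Field k] [AddCommGroup V] [Module k V]

def IsCompatibleForm (invol : P → P) (ψ : P → Submodule k V) (B : LinearMap.BilinForm k V) :
    Prop :=
  ∀ p, ∀ v : V, v ∈ ψ (invol p) ↔ ∀ w ∈ ψ p, B v w = 0

def endSubalgebra (ψ : P → Submodule k V) : Subalgebra k (Module.End k V) where
  carrier := {f | ∀ p, (ψ p).map f ≤ ψ p}
  mul_mem' {f g} hf hg p := by
    rw [Module.End.mul_eq_comp, Submodule.map_comp]
    exact (Submodule.map_mono (hg p)).trans (hf p)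
  add_mem' hf hg p := by
    rintro _ ⟨v, hv, rfl⟩
    exact add_mem (hf p ⟨v, hv, rfl⟩) (hg p ⟨v, hv, rfl⟩)
  algebraMap_mem' c p := by
    rintro _ ⟨v, hv, rfl⟩
    exact (ψ p).smul_mem c hv

variable {invol : P → P} {ψ : P → Submodule k V} {B B₁ B₂ : LinearMap.BilinForm k V}

theorem IsCompatibleForm.mem_iff (hB : IsCompatibleForm invol ψ B)
    (hinv : Function.Involutive invol) (p : P) (v : V) :
    v ∈ ψ p ↔ ∀ w ∈ ψ (invol p), B v w = 0 := by
  simpa only [hinv p] using hB (invol p) v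

variable [FiniteDimensional k V] (h₁nd : B₁.Nondegenerate)

theorem symmCompOfNondegenerate_mem_endSubalgebra (hinv : Function.Involutive invol)
    (h₁ : IsCompatibleForm invol ψ B₁) (h₂ : IsCompatibleForm invol ψ B₂) :
    B₂.symmCompOfNondegenerate B₁ h₁nd ∈ endSubalgebra ψ := by
  rintro p _ ⟨v, hv, rfl⟩
  rw [h₁.mem_iff hinv]
  intro w hw
  rw [BilinForm.symmCompOfNondegenerate_left_apply]
  exact (h₂.mem_iff hinv p v).1 hv w hw

theorem symmCompOfNondegenerate_injective (h₂nd : B₂.Nondegenerate) :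
    Function.Injective (B₂.symmCompOfNondegenerate B₁ h₁nd) := by
  refine (injective_iff_map_eq_zero _).2 fun v hv ↦ h₂nd.1 v fun w ↦ ?_
  rw [← BilinForm.symmCompOfNondegenerate_left_apply B₂ h₁nd, hv, map_zero,
    LinearMap.zero_apply]

theorem isSelfAdjoint_symmCompOfNondegenerate
    (hB : (IsSymm B₁ ∧ IsSymm B₂) ∨ (IsAlt B₁ ∧ IsAlt B₂)) :
    B₁.IsSelfAdjoint (B₂.symmCompOfNondegenerate B₁ h₁nd) := by
  intro x y
  have hf := BilinForm.symmCompOfNondegenerate_left_apply B₂ h₁nd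
  rcases hB with ⟨h₁, h₂⟩ | ⟨h₁, h₂⟩
  · calc B₁ (B₂.symmCompOfNondegenerate B₁ h₁nd x) y = B₂ y x :=
          (hf y x).trans (h₂.eq x y)
      _ = B₁ x (B₂.symmCompOfNondegenerate B₁ h₁nd y) := (hf x y).symm.trans (h₁.eq _ _)
  · calc B₁ (B₂.symmCompOfNondegenerate B₁ h₁nd x) y = -B₂ y x :=
          (hf y x).trans (h₂.neg y x).symm
      _ = B₁ x (B₂.symmCompOfNondegenerate B₁ h₁nd y) := by rw [← hf x y, h₁.neg]

theorem isSkewAdjoint_symmCompOfNondegenerate (h₁ : IsSymm B₁) (h₂ : IsAlt B₂) :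
    B₁.IsSkewAdjoint (B₂.symmCompOfNondegenerate B₁ h₁nd) := by
  intro x y
  have hf := BilinForm.symmCompOfNondegenerate_left_apply B₂ h₁nd
  calc B₁ (B₂.symmCompOfNondegenerate B₁ h₁nd x) y = -B₂ y x :=
        (hf y x).trans (h₂.neg y x).symm
    _ = B₁ x (-B₂.symmCompOfNondegenerate B₁ h₁nd y) := by
      rw [← hf x y, map_neg, ← h₁.eq]; rfl

theorem not_isSymm_and_isAlt [Nontrivial V] (h2 : (2 : k) ≠ 0) (hinv : Function.Involutive invol)
    (hlocal : ∀ f ∈ endSubalgebra ψ, ∃ c : k, IsNilpotent (f - c • 1))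
    (h₁nd : B₁.Nondegenerate) (h₂nd : B₂.Nondegenerate)
    (h₁ : IsCompatibleForm invol ψ B₁) (h₂ : IsCompatibleForm invol ψ B₂) :
    ¬(IsSymm B₁ ∧ IsAlt B₂) := by
  rintro ⟨hsymm, halt⟩
  obtain ⟨c, hc⟩ := hlocal _ (symmCompOfNondegenerate_mem_endSubalgebra h₁nd hinv h₁ h₂)
  exact ne_zero_of_injective_of_isNilpotent_sub (symmCompOfNondegenerate_injective h₁nd h₂nd) hc
    (eq_zero_of_isSkewAdjoint_of_isNilpotent_sub h2 h₁nd.2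
      (isSkewAdjoint_symmCompOfNondegenerate h₁nd hsymm halt) hc)

theorem exists_linearEquiv_of_isSelfAdjoint (h2 : (2 : k) ≠ 0) {f : Module.End k V}
    (hfψ : f ∈ endSubalgebra ψ) (hf : B.IsSelfAdjoint f) {c : k} (hc0 : c ≠ 0) (hc : IsNilpotent (f - c • 1)) :
    ∃ h : V ≃ₗ[k] V, (∀ p, (ψ p).map (h : V →ₗ[k] V) = ψ p) ∧
      ∀ x y, B (f x) y = c * B (h x) (h y) := by
  have hnil : IsNilpotent (c⁻¹ • f - 1) := by
    have : c⁻¹ • f - 1 = c⁻¹ • (f - c • 1) := by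
      rw [smul_sub, smul_smul, inv_mul_cancel₀ hc0, one_smul]
    exact this ▸ hc.smul c⁻¹
  obtain ⟨h, hmem, hsq, hunit⟩ := exists_mem_adjoin_sq_eq_of_isNilpotent_sub_one h2.isUnit hnil
  have hψ : h ∈ endSubalgebra ψ :=
    Algebra.adjoin_le (Set.singleton_subset_iff.2 (Subalgebra.smul_mem _ hfψ c⁻¹)) hmem
  have hsa : B.IsSelfAdjoint h :=
    IsSelfAdjoint.of_mem_adjoin (f := c⁻¹ • f) (hf.smul c⁻¹) hmem
  refine ⟨LinearMap.GeneralLinearGroup.toLinearEquiv hunit.unit, fun p ↦ ?_, fun x y ↦ ?_⟩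
  · exact Submodule.eq_of_le_of_finrank_eq (hψ p) (LinearEquiv.finrank_map_eq _ _)
  · have : h (h x) = c⁻¹ • f x := by rw [← Module.End.mul_apply, ← sq, hsq]; rfl
    simp only [LinearMap.GeneralLinearGroup.coe_toLinearEquiv, IsUnit.unit_spec]
    rw [← hsa, this, map_smul, LinearMap.smul_apply, smul_eq_mul, mul_inv_cancel_left₀ hc0]

end Compatible

theorem compatible_forms_unique_up_to_scalar_and_automorphism_general
    {k V P : Type*} [Field k] [AddCommGroup V] [Module k V] [FiniteDimensional k V]
    (h2 : (2 : k) ≠ 0) [Nontrivial V]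
    (invol : P → P) (hinv : Function.Involutive invol)
    (ψ : P → Submodule k V)
    (hlocal : ∀ f : V →ₗ[k] V, (∀ p, (ψ p).map f ≤ ψ p) →
      ∃ c : k, IsNilpotent (f - c • LinearMap.id))
    (B₁ B₂ : LinearMap.BilinForm k V)
    (h₁nd : LinearMap.BilinForm.Nondegenerate B₁)
    (h₁sa : LinearMap.IsSymm B₁ ∨ LinearMap.IsAlt B₁)
    (h₁c : ∀ p, ∀ v : V, v ∈ ψ (invol p) ↔ ∀ w ∈ ψ p, B₁ v w = 0)
    (h₂nd : LinearMap.BilinForm.Nondegenerate B₂)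
    (h₂sa : LinearMap.IsSymm B₂ ∨ LinearMap.IsAlt B₂)
    (h₂c : ∀ p, ∀ v : V, v ∈ ψ (invol p) ↔ ∀ w ∈ ψ p, B₂ v w = 0) :
    ((LinearMap.IsSymm B₁ ∧ LinearMap.IsSymm B₂) ∨
      (LinearMap.IsAlt B₁ ∧ LinearMap.IsAlt B₂)) ∧
    ∃ (c : k) (h : V ≃ₗ[k] V), c ≠ 0 ∧
      (∀ p, (ψ p).map (h : V →ₗ[k] V) = ψ p) ∧
      ∀ x y : V, B₂ x y = c * B₁ (h x) (h y) := by
  have hsame : (LinearMap.IsSymm B₁ ∧ LinearMap.IsSymm B₂) ∨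
      (LinearMap.IsAlt B₁ ∧ LinearMap.IsAlt B₂) := by
    rcases h₁sa with h₁ | h₁ <;> rcases h₂sa with h₂ | h₂
    · exact .inl ⟨h₁, h₂⟩
    · exact (not_isSymm_and_isAlt h2 hinv hlocal h₁nd h₂nd h₁c h₂c ⟨h₁, h₂⟩).elim
    · exact (not_isSymm_and_isAlt h2 hinv hlocal h₂nd h₁nd h₂c h₁c ⟨h₂, h₁⟩).elim
    · exact .inr ⟨h₁, h₂⟩
  have hfψ := symmCompOfNondegenerate_mem_endSubalgebra h₁nd hinv h₁c h₂c
  obtain ⟨c, hc⟩ := hlocal _ hfψ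
  have hc0 : c ≠ 0 :=
    ne_zero_of_injective_of_isNilpotent_sub (symmCompOfNondegenerate_injective h₁nd h₂nd) hc
  obtain ⟨h, hψ, hB⟩ := exists_linearEquiv_of_isSelfAdjoint h2 hfψ
    (isSelfAdjoint_symmCompOfNondegenerate h₁nd hsame) hc0 hc
  refine ⟨hsame, c, h, hc0, hψ, fun x y ↦ ?_⟩
  rw [← hB, BilinForm.symmCompOfNondegenerate_left_apply]

/-- Let `k` be a field of characteristic `≠ 2`, `(P, ⊥)` a poset with
an order-reversing involution, and `ψ` an indecomposable linear representation of `P`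
in a finite-dimensional `k`-vector space `V` such that every endomorphism of `ψ` has
the form `c • id + r` with `c ∈ k` and `r` nilpotent.  If `B₁`, `B₂` are compatible
forms for `ψ`, then they are both symmetric or both alternating, and there are a
nonzero scalar `c` and an automorphism `h` of `ψ` with `B₂(x, y) = c · B₁(h x, h y)`
for all `x, y`. -/
theorem compatible_forms_unique_up_to_scalar_and_automorphism
    {k V P : Type*} [Field k] [AddCommGroup V] [Module k V] [FiniteDimensional k V]
    [PartialOrder P] (h2 : (2 : k) ≠ 0) [Nontrivial V]
    (invol : P → P) (hinv : Function.Involutive invol) (hanti : Antitone invol)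
    (ψ : P → Submodule k V) (hmono : Monotone ψ)
    (hindec : ∀ U' U'' : Submodule k V, IsCompl U' U'' →
      (∀ p, ψ p = (ψ p ⊓ U') ⊔ (ψ p ⊓ U'')) → U' = ⊥ ∨ U'' = ⊥)
    (hlocal : ∀ f : V →ₗ[k] V, (∀ p, (ψ p).map f ≤ ψ p) →
      ∃ c : k, IsNilpotent (f - c • LinearMap.id))
    (B₁ B₂ : LinearMap.BilinForm k V)
    (h₁nd : LinearMap.BilinForm.Nondegenerate B₁)
    (h₁sa : LinearMap.IsSymm B₁ ∨ LinearMap.IsAlt B₁)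
    (h₁c : ∀ p, ∀ v : V, v ∈ ψ (invol p) ↔ ∀ w ∈ ψ p, B₁ v w = 0)
    (h₂nd : LinearMap.BilinForm.Nondegenerate B₂)
    (h₂sa : LinearMap.IsSymm B₂ ∨ LinearMap.IsAlt B₂)
    (h₂c : ∀ p, ∀ v : V, v ∈ ψ (invol p) ↔ ∀ w ∈ ψ p, B₂ v w = 0) :
    ((LinearMap.IsSymm B₁ ∧ LinearMap.IsSymm B₂) ∨
      (LinearMap.IsAlt B₁ ∧ LinearMap.IsAlt B₂)) ∧
    ∃ (c : k) (h : V ≃ₗ[k] V), c ≠ 0 ∧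
      (∀ p, (ψ p).map (h : V →ₗ[k] V) = ψ p) ∧
      ∀ x y : V, B₂ x y = c * B₁ (h x) (h y) :=
  compatible_forms_unique_up_to_scalar_and_automorphism_general h2 invol hinv ψ hlocal B₁ B₂ h₁nd
    h₁sa h₁c h₂nd h₂sa h₂c
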